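/- Consider i.i.d. data (X_i, A_i, Ỹ_i, Ŷ_i), i = 1,…,n, a fixed action a, a bound B ≥ 1 with |Ỹ| ≤ B almost surely, and a measurable function f_0 with ||f_0||_∞ ≤ B. For f in the RKHS H_γ of the anisotropic Gaussian kernel, let f̂_n = argmin_{f ∈ H_γ} P_n I(A = a){Ŷ − f(X)}^2 + λ ||f||_{H_γ}^2 and d_n = argmin_{f ∈ H_γ} P_n I(A = a){Ỹ − f(X)}^2 + λ ||f||_{H_γ}^2. Define h_f = I(A = a)[{Ỹ − f(X)}^2 − {Ỹ − f_0(X)}^2] and E(f) = λ ||f||_{H_γ}^2 + E h_{T_B(f)}, where T_B is truncation to [−B, B]. Then for any f ∈ H_γ, E(f̂_n) ≤ λ ||f||_{H_γ}^2 + P_n h_f − P_n h_{f̂_n} + E h_{T_B(f̂_n)} + 2 P_n (Ŷ − Ỹ)^2, where in E h_{T_B(f̂_n)} the expectation is evaluated for fixed f and then f = f̂_n is substituted. -/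

import Mathlib

/-!
The expectation terms are the same number on both sides, so the claim is
`R̃(f̂ₙ) ≤ R̃(f) + 2 Pₙ (Ŷ − Ỹ)²` for the penalized empirical risk `R̃` with responses `Ỹ`;
as `dₙ` minimizes `R̃`, it suffices to compare `f̂ₙ` with `dₙ`. The penalty `λ‖·‖²` is convex on
`H_γ` (read off the `L²` feature-map representations) and the squared loss is strongly convex,
so testing the minimality of `f̂ₙ` for the `Ŷ`-risk `R̂` against the midpoint of `f̂ₙ` and `dₙ`
gives `R̂(f̂ₙ) ≤ R̂(dₙ) − ½ Pₙ I(A = a)(f̂ₙ − dₙ)²`. Switching the responses from `Ŷ` to `Ỹ`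
changes `R(f̂ₙ) − R(dₙ)` by `2 Pₙ I(A = a)(Ŷ − Ỹ)(f̂ₙ − dₙ)`, which AM-GM bounds by
`½ Pₙ I(A = a)(f̂ₙ − dₙ)² + 2 Pₙ (Ŷ − Ỹ)²`.
-/

open MeasureTheory

/-- The anisotropic Gaussian kernel on `ℝ^q`:
`K_γ(x, z) = exp(− Σ_j γ_j (x_j − z_j)²)`. -/
noncomputable def gaussKernel (q : ℕ) (γ : Fin q → ℝ) (x z : Fin q → ℝ) : ℝ :=
  Real.exp (-∑ j, γ j * (x j - z j) ^ 2)

/-- The feature map `φ_γ^x(u) = (4/π)^{q/4} (∏_j γ_j)^{1/4} exp(−Σ_j 2γ_j (x_j − u_j)²)`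
of the anisotropic Gaussian kernel. -/
noncomputable def gaussFeature (q : ℕ) (γ : Fin q → ℝ) (x : Fin q → ℝ) :
    (Fin q → ℝ) → ℝ :=
  fun u => (4 / Real.pi) ^ ((q : ℝ) / 4) * (∏ j, γ j) ^ ((1 : ℝ) / 4) *
    Real.exp (-∑ j, 2 * γ j * (x j - u j) ^ 2)

/-- Membership in the reproducing kernel Hilbert space `H_γ(D)` of the anisotropic Gaussian
kernel, via the `L²` feature-map characterization (Steinwart–Christmann, Theorem 4.21):
`f ∈ H_γ(D)` iff there is `g ∈ L²(ℝ^q)` with `f(x) = ⟨φ_γ^x, g⟩_{L²}` for all `x ∈ D`. -/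
def memGaussRKHS (q : ℕ) (γ : Fin q → ℝ) (D : Set (Fin q → ℝ))
    (f : (Fin q → ℝ) → ℝ) : Prop :=
  ∃ g : (Fin q → ℝ) → ℝ, MemLp g 2 (volume : Measure (Fin q → ℝ)) ∧
    ∀ x ∈ D, f x = ∫ u, gaussFeature q γ x u * g u

/-- The RKHS norm of `f` in `H_γ(D)`: the infimum of `‖g‖_{L²(ℝ^q)}` over all feature-map
representations `f = ⟨φ_γ^·, g⟩_{L²}` of `f` on `D`. -/
noncomputable def gaussRKHSNorm (q : ℕ) (γ : Fin q → ℝ) (D : Set (Fin q → ℝ))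
    (f : (Fin q → ℝ) → ℝ) : ℝ :=
  sInf {r | ∃ g : (Fin q → ℝ) → ℝ, MemLp g 2 (volume : Measure (Fin q → ℝ)) ∧
    (∀ x ∈ D, f x = ∫ u, gaussFeature q γ x u * g u) ∧
    r = Real.sqrt (∫ u, (g u) ^ 2)}

/-- Truncation of a real number to `[−B, B]`. -/
noncomputable def trunc (B y : ℝ) : ℝ := max (min y B) (-B)

section SquaredLoss

variable {ι α : Type*} (s : Finset ι) (x : ι → α)

def sqLoss (y : ι → ℝ) (g : α → ℝ) : ℝ := ∑ i ∈ s, (y i - g (x i)) ^ 2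

lemma sqLoss_midpoint (y : ι → ℝ) (g h : α → ℝ) :
    sqLoss s x y ((1 / 2 : ℝ) • g + (1 / 2 : ℝ) • h)
      = (sqLoss s x y g + sqLoss s x y h) / 2 - (∑ i ∈ s, (g (x i) - h (x i)) ^ 2) / 4 := by
  simp only [sqLoss, Pi.add_apply, Pi.smul_apply, smul_eq_mul, ← Finset.sum_add_distrib,
    Finset.sum_div, ← Finset.sum_sub_distrib]
  exact Finset.sum_congr rfl fun i _ => by ring

-- The change of excess loss under a change of responses is `2 (y' - y)(g - h)`, split by AM-GM.
lemma sqLoss_sub_sqLoss_le (y y' : ι → ℝ) (g h : α → ℝ) :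
    sqLoss s x y g - sqLoss s x y h
      ≤ sqLoss s x y' g - sqLoss s x y' h + (∑ i ∈ s, (g (x i) - h (x i)) ^ 2) / 2
        + 2 * ∑ i ∈ s, (y' i - y i) ^ 2 := by
  simp only [sqLoss, ← Finset.sum_sub_distrib, Finset.sum_div, Finset.mul_sum,
    ← Finset.sum_add_distrib]
  exact Finset.sum_le_sum fun i _ =>
    by nlinarith [sq_nonneg (g (x i) - h (x i) - 2 * (y' i - y i))]

theorem sqLoss_add_pen_le_of_isMinOn_perturbed {H : Set (α → ℝ)} {pen : (α → ℝ) → ℝ}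
    (hpen : ConvexOn ℝ H pen) {c : ℝ} (hc : 0 ≤ c) {y y' : ι → ℝ} {ĝ d : α → ℝ}
    (hĝ : ĝ ∈ H) (hĝmin : IsMinOn (fun g => sqLoss s x y' g / c + pen g) H ĝ)
    (hd : d ∈ H) (hdmin : IsMinOn (fun g => sqLoss s x y g / c + pen g) H d)
    {f : α → ℝ} (hf : f ∈ H) :
    sqLoss s x y ĝ / c + pen ĝ
      ≤ sqLoss s x y f / c + pen f + 2 * (∑ i ∈ s, (y' i - y i) ^ 2) / c := by
  have hmid_mem : (1 / 2 : ℝ) • ĝ + (1 / 2 : ℝ) • d ∈ H :=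
    hpen.1 hĝ hd (by norm_num) (by norm_num) (by norm_num)
  have hmid_pen : pen ((1 / 2 : ℝ) • ĝ + (1 / 2 : ℝ) • d) ≤ (pen ĝ + pen d) / 2 := by
    have := hpen.2 hĝ hd (by norm_num : (0 : ℝ) ≤ 1 / 2) (by norm_num : (0 : ℝ) ≤ 1 / 2)
      (by norm_num)
    simp only [smul_eq_mul] at this
    linarith
  have hĝ_vs_mid := isMinOn_iff.mp hĝmin _ hmid_mem
  rw [sqLoss_midpoint] at hĝ_vs_mid
  have hperturb := mul_le_mul_of_nonneg_right (sqLoss_sub_sqLoss_le s x y y' ĝ d)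
    (inv_nonneg.mpr hc)
  have hd_vs_f := isMinOn_iff.mp hdmin f hf
  simp only [div_eq_mul_inv] at hĝ_vs_mid hd_vs_f ⊢
  linarith

end SquaredLoss

section GaussRKHS

variable (q : ℕ) (γ : Fin q → ℝ) (D : Set (Fin q → ℝ))

def IsGaussRKHSRep (f g : (Fin q → ℝ) → ℝ) : Prop :=
  MemLp g 2 (volume : Measure (Fin q → ℝ)) ∧ ∀ x ∈ D, f x = ∫ u, gaussFeature q γ x u * g u

variable {q γ D}

lemma gaussFeature_memLp (hγ : ∀ j, 0 < γ j) (x : Fin q → ℝ) :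
    MemLp (gaussFeature q γ x) 2 (volume : Measure (Fin q → ℝ)) := by
  have hcont : Continuous (gaussFeature q γ x) := by
    unfold gaussFeature; fun_prop
  rw [memLp_two_iff_integrable_sq hcont.aestronglyMeasurable]
  have hprod : Integrable
      (fun u : Fin q → ℝ => ∏ j, Real.exp (-(4 * γ j) * (u j - x j) ^ 2)) :=
    Integrable.fintype_prod (f := fun j t => Real.exp (-(4 * γ j) * (t - x j) ^ 2))
      fun j => (integrable_exp_neg_mul_sq (by linarith [hγ j])).comp_sub_right (x j)
  refine (hprod.const_mul
    (((4 / Real.pi) ^ ((q : ℝ) / 4) * (∏ j, γ j) ^ ((1 : ℝ) / 4)) ^ 2)).congr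
    (Filter.Eventually.of_forall fun u => ?_)
  simp only [gaussFeature, mul_pow, ← Real.exp_sum, ← Real.exp_nat_mul]
  congr 2
  rw [← Finset.sum_neg_distrib, Finset.mul_sum]
  exact Finset.sum_congr rfl fun j _ => by push_cast; ring

lemma integrable_gaussFeature_mul (hγ : ∀ j, 0 < γ j) (x : Fin q → ℝ)
    {g : (Fin q → ℝ) → ℝ} (hg : MemLp g 2 (volume : Measure (Fin q → ℝ))) :
    Integrable (fun u => gaussFeature q γ x u * g u) (volume : Measure (Fin q → ℝ)) :=
  (gaussFeature_memLp hγ x).integrable_mul hg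

lemma IsGaussRKHSRep.smul_add_smul (hγ : ∀ j, 0 < γ j) {f₁ f₂ g₁ g₂ : (Fin q → ℝ) → ℝ}
    (h₁ : IsGaussRKHSRep q γ D f₁ g₁) (h₂ : IsGaussRKHSRep q γ D f₂ g₂) (a b : ℝ) :
    IsGaussRKHSRep q γ D (a • f₁ + b • f₂) (a • g₁ + b • g₂) := by
  refine ⟨(h₁.1.const_smul a).add (h₂.1.const_smul b), fun x hx => ?_⟩
  have hint₁ := (integrable_gaussFeature_mul hγ x h₁.1).const_mul a
  have hint₂ := (integrable_gaussFeature_mul hγ x h₂.1).const_mul b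
  simp only [Pi.add_apply, Pi.smul_apply, smul_eq_mul, h₁.2 x hx, h₂.2 x hx,
    ← integral_const_mul, ← integral_add hint₁ hint₂]
  exact integral_congr_ae (Filter.Eventually.of_forall fun u => by ring)

lemma convex_setOf_memGaussRKHS (hγ : ∀ j, 0 < γ j) :
    Convex ℝ {f | memGaussRKHS q γ D f} := by
  rintro f₁ ⟨g₁, h₁⟩ f₂ ⟨g₂, h₂⟩ a b - - -
  exact ⟨_, IsGaussRKHSRep.smul_add_smul hγ h₁ h₂ a b⟩

lemma gaussRKHSNorm_nonneg (f : (Fin q → ℝ) → ℝ) : 0 ≤ gaussRKHSNorm q γ D f :=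
  Real.sInf_nonneg (by rintro r ⟨g, -, -, rfl⟩; exact Real.sqrt_nonneg _)

lemma sq_gaussRKHSNorm_le {f g : (Fin q → ℝ) → ℝ} (hg : IsGaussRKHSRep q γ D f g) :
    gaussRKHSNorm q γ D f ^ 2 ≤ ∫ u, g u ^ 2 := by
  have hle : gaussRKHSNorm q γ D f ≤ Real.sqrt (∫ u, g u ^ 2) :=
    csInf_le ⟨0, by rintro r ⟨g, -, -, rfl⟩; exact Real.sqrt_nonneg _⟩ ⟨g, hg.1, hg.2, rfl⟩
  calc gaussRKHSNorm q γ D f ^ 2 ≤ Real.sqrt (∫ u, g u ^ 2) ^ 2 :=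
        pow_le_pow_left₀ (gaussRKHSNorm_nonneg f) hle 2
    _ = ∫ u, g u ^ 2 := Real.sq_sqrt (integral_nonneg fun u => sq_nonneg _)

lemma exists_isGaussRKHSRep_integral_sq_lt {f : (Fin q → ℝ) → ℝ} (hf : memGaussRKHS q γ D f)
    {ε : ℝ} (hε : 0 < ε) :
    ∃ g, IsGaussRKHSRep q γ D f g ∧ ∫ u, g u ^ 2 < gaussRKHSNorm q γ D f ^ 2 + ε := by
  have hlt : gaussRKHSNorm q γ D f < Real.sqrt (gaussRKHSNorm q γ D f ^ 2 + ε) :=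
    (Real.lt_sqrt (gaussRKHSNorm_nonneg f)).mpr (by linarith)
  obtain ⟨g, hg⟩ := hf
  obtain ⟨_, ⟨g, hgL2, hgrep, rfl⟩, hg_lt⟩ :=
    exists_lt_of_csInf_lt (by exact ⟨_, g, hg.1, hg.2, rfl⟩) hlt
  exact ⟨g, ⟨hgL2, hgrep⟩,
    (Real.sqrt_lt_sqrt_iff (integral_nonneg fun u => sq_nonneg _)).mp hg_lt⟩

lemma integral_sq_convexCombo_le {Ω : Type*} [MeasurableSpace Ω] {μ : Measure Ω}
    {g₁ g₂ : Ω → ℝ} (h₁ : MemLp g₁ 2 μ) (h₂ : MemLp g₂ 2 μ) {a b : ℝ} (ha : 0 ≤ a) (hb : 0 ≤ b)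
    (hab : a + b = 1) :
    ∫ u, (a * g₁ u + b * g₂ u) ^ 2 ∂μ ≤ a * (∫ u, g₁ u ^ 2 ∂μ) + b * ∫ u, g₂ u ^ 2 ∂μ := by
  have hint₁ := h₁.integrable_sq.const_mul a
  have hint₂ := h₂.integrable_sq.const_mul b
  rw [← integral_const_mul, ← integral_const_mul, ← integral_add hint₁ hint₂]
  refine integral_mono (((h₁.const_mul a).add (h₂.const_mul b)).integrable_sq)
    (hint₁.add hint₂) fun u => ?_
  obtain rfl : b = 1 - a := by linarith
  nlinarith [mul_nonneg ha hb, sq_nonneg (g₁ u - g₂ u)]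

lemma convexOn_sq_gaussRKHSNorm (hγ : ∀ j, 0 < γ j) :
    ConvexOn ℝ {f | memGaussRKHS q γ D f} (fun f => gaussRKHSNorm q γ D f ^ 2) := by
  refine ⟨convex_setOf_memGaussRKHS hγ, fun f₁ hf₁ f₂ hf₂ a b ha hb hab => ?_⟩
  simp only [smul_eq_mul]
  refine le_of_forall_pos_le_add fun ε hε => ?_
  obtain ⟨g₁, hg₁, hg₁_lt⟩ := exists_isGaussRKHSRep_integral_sq_lt hf₁ hε
  obtain ⟨g₂, hg₂, hg₂_lt⟩ := exists_isGaussRKHSRep_integral_sq_lt hf₂ hε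
  calc gaussRKHSNorm q γ D (a • f₁ + b • f₂) ^ 2
      ≤ ∫ u, (a * g₁ u + b * g₂ u) ^ 2 := sq_gaussRKHSNorm_le (hg₁.smul_add_smul hγ hg₂ a b)
    _ ≤ a * (∫ u, g₁ u ^ 2) + b * ∫ u, g₂ u ^ 2 :=
        integral_sq_convexCombo_le hg₁.1 hg₂.1 ha hb hab
    _ ≤ a * gaussRKHSNorm q γ D f₁ ^ 2 + b * gaussRKHSNorm q γ D f₂ ^ 2 + ε := by
        nlinarith [mul_le_mul_of_nonneg_left hg₁_lt.le ha, mul_le_mul_of_nonneg_left hg₂_lt.le hb]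

end GaussRKHS

open scoped Classical in
theorem stmt_11_general
    (q : ℕ) (𝒜 : Type*) [MeasurableSpace 𝒜] (a : 𝒜)
    (n : ℕ)
    (X : Fin n → (Fin q → ℝ)) (A : Fin n → 𝒜) (Ytil Yhat : Fin n → ℝ)
    (ν : Measure ((Fin q → ℝ) × 𝒜 × ℝ))
    (B : ℝ)
    (f₀ : (Fin q → ℝ) → ℝ)
    (γ : Fin q → ℝ) (hγ : ∀ j, 0 < γ j) (lam : ℝ) (hlam : 0 < lam)
    (fhat dn : (Fin q → ℝ) → ℝ)
    (hfhat_mem : memGaussRKHS q γ Set.univ fhat)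
    (hfhat_min : ∀ f, memGaussRKHS q γ Set.univ f →
      (∑ i, if A i = a then (Yhat i - fhat (X i)) ^ 2 else 0) / n
          + lam * (gaussRKHSNorm q γ Set.univ fhat) ^ 2
        ≤ (∑ i, if A i = a then (Yhat i - f (X i)) ^ 2 else 0) / n
          + lam * (gaussRKHSNorm q γ Set.univ f) ^ 2)
    (hdn_mem : memGaussRKHS q γ Set.univ dn)
    (hdn_min : ∀ f, memGaussRKHS q γ Set.univ f →
      (∑ i, if A i = a then (Ytil i - dn (X i)) ^ 2 else 0) / n
          + lam * (gaussRKHSNorm q γ Set.univ dn) ^ 2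
        ≤ (∑ i, if A i = a then (Ytil i - f (X i)) ^ 2 else 0) / n
          + lam * (gaussRKHSNorm q γ Set.univ f) ^ 2) :
    ∀ f, memGaussRKHS q γ Set.univ f →
      lam * (gaussRKHSNorm q γ Set.univ fhat) ^ 2
          + (∫ p, (if p.2.1 = a then
              (p.2.2 - trunc B (fhat p.1)) ^ 2 - (p.2.2 - f₀ p.1) ^ 2 else 0) ∂ν)
        ≤ lam * (gaussRKHSNorm q γ Set.univ f) ^ 2
          + (∑ i, if A i = a then
              (Ytil i - f (X i)) ^ 2 - (Ytil i - f₀ (X i)) ^ 2 else 0) / n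
          - (∑ i, if A i = a then
              (Ytil i - fhat (X i)) ^ 2 - (Ytil i - f₀ (X i)) ^ 2 else 0) / n
          + (∫ p, (if p.2.1 = a then
              (p.2.2 - trunc B (fhat p.1)) ^ 2 - (p.2.2 - f₀ p.1) ^ 2 else 0) ∂ν)
          + 2 * (∑ i, (Yhat i - Ytil i) ^ 2) / n := by
  intro f hf
  set s := Finset.univ.filter (fun i => A i = a)
  have hpen := (convexOn_sq_gaussRKHSNorm (D := Set.univ) hγ).smul hlam.le
  have key := sqLoss_add_pen_le_of_isMinOn_perturbed s X hpen (Nat.cast_nonneg n)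
    hfhat_mem (isMinOn_iff.mpr fun g hg => by
      simpa only [sqLoss, s, Finset.sum_filter, smul_eq_mul] using hfhat_min g hg)
    hdn_mem (isMinOn_iff.mpr fun g hg => by
      simpa only [sqLoss, s, Finset.sum_filter, smul_eq_mul] using hdn_min g hg) hf
  have hexcess : ∀ g : (Fin q → ℝ) → ℝ,
      (∑ i, if A i = a then (Ytil i - g (X i)) ^ 2 - (Ytil i - f₀ (X i)) ^ 2 else 0)
        = sqLoss s X Ytil g - sqLoss s X Ytil f₀ := fun g => by
    simp only [sqLoss, s, Finset.sum_filter, ← Finset.sum_sub_distrib]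
    exact Finset.sum_congr rfl fun i _ => by split_ifs <;> ring
  have hsub : ∑ i ∈ s, (Yhat i - Ytil i) ^ 2 ≤ ∑ i, (Yhat i - Ytil i) ^ 2 :=
    Finset.sum_le_univ_sum_of_nonneg fun i => sq_nonneg _
  have hsub' := mul_le_mul_of_nonneg_right hsub (inv_nonneg.mpr (Nat.cast_nonneg (α := ℝ) n))
  rw [hexcess, hexcess]
  simp only [smul_eq_mul, div_eq_mul_inv] at key ⊢
  linarith

open scoped Classical in
/-- Basic decomposition for kernel ridge regression with surrogate responses.  With
`f̂ₙ` the KRR minimizer based on surrogate responses `Ŷ`, `dₙ` the KRR minimizer based on the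
true responses `Ỹ`, `h_f = I(A=a)[{Ỹ − f(X)}² − {Ỹ − f₀(X)}²]` and
`ℰ(f) = λ‖f‖²_{H_γ} + E h_{T_B(f)}`, one has, for every `f ∈ H_γ`,
`ℰ(f̂ₙ) ≤ λ‖f‖²_{H_γ} + Pₙ h_f − Pₙ h_{f̂ₙ} + E h_{T_B(f̂ₙ)} + 2 Pₙ (Ŷ − Ỹ)²`. -/
theorem stmt_11
    (q : ℕ) (𝒜 : Type*) [MeasurableSpace 𝒜] (a : 𝒜)
    (n : ℕ) (hn : 0 < n)
    (X : Fin n → (Fin q → ℝ)) (A : Fin n → 𝒜) (Ytil Yhat : Fin n → ℝ)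
    (ν : Measure ((Fin q → ℝ) × 𝒜 × ℝ)) [IsProbabilityMeasure ν]
    (B : ℝ) (hB : 1 ≤ B)
    (hYae : ∀ᵐ p ∂ν, |p.2.2| ≤ B)
    (hYdata : ∀ i, |Ytil i| ≤ B)
    (f₀ : (Fin q → ℝ) → ℝ) (hf₀meas : Measurable f₀) (hf₀bdd : ∀ x, |f₀ x| ≤ B)
    (γ : Fin q → ℝ) (hγ : ∀ j, 0 < γ j) (lam : ℝ) (hlam : 0 < lam)
    (fhat dn : (Fin q → ℝ) → ℝ)
    (hfhat_mem : memGaussRKHS q γ Set.univ fhat)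
    (hfhat_min : ∀ f, memGaussRKHS q γ Set.univ f →
      (∑ i, if A i = a then (Yhat i - fhat (X i)) ^ 2 else 0) / n
          + lam * (gaussRKHSNorm q γ Set.univ fhat) ^ 2
        ≤ (∑ i, if A i = a then (Yhat i - f (X i)) ^ 2 else 0) / n
          + lam * (gaussRKHSNorm q γ Set.univ f) ^ 2)
    (hdn_mem : memGaussRKHS q γ Set.univ dn)
    (hdn_min : ∀ f, memGaussRKHS q γ Set.univ f →
      (∑ i, if A i = a then (Ytil i - dn (X i)) ^ 2 else 0) / n
          + lam * (gaussRKHSNorm q γ Set.univ dn) ^ 2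
        ≤ (∑ i, if A i = a then (Ytil i - f (X i)) ^ 2 else 0) / n
          + lam * (gaussRKHSNorm q γ Set.univ f) ^ 2) :
    ∀ f, memGaussRKHS q γ Set.univ f →
      lam * (gaussRKHSNorm q γ Set.univ fhat) ^ 2
          + (∫ p, (if p.2.1 = a then
              (p.2.2 - trunc B (fhat p.1)) ^ 2 - (p.2.2 - f₀ p.1) ^ 2 else 0) ∂ν)
        ≤ lam * (gaussRKHSNorm q γ Set.univ f) ^ 2
          + (∑ i, if A i = a then
              (Ytil i - f (X i)) ^ 2 - (Ytil i - f₀ (X i)) ^ 2 else 0) / n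
          - (∑ i, if A i = a then
              (Ytil i - fhat (X i)) ^ 2 - (Ytil i - f₀ (X i)) ^ 2 else 0) / n
          + (∫ p, (if p.2.1 = a then
              (p.2.2 - trunc B (fhat p.1)) ^ 2 - (p.2.2 - f₀ p.1) ^ 2 else 0) ∂ν)
          + 2 * (∑ i, (Yhat i - Ytil i) ^ 2) / n :=
  stmt_11_general q 𝒜 a n X A Ytil Yhat ν B f₀ γ hγ lam hlam fhat dn hfhat_mem hfhat_min hdn_mem
    hdn_min
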